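/- arXiv:1003.0415 — 6 statements merged into one kernel-verified Lean document; each statement's English description precedes it below -/
import Mathlib

section
/- Let Φ be an m×N complex matrix with unit-norm columns and coherence μ > 0. Let S be a set of column indices with |S| < (1/2)(1/μ + 1), and let u = Φx for a vector x ∈ ℂ^N with support contained in S. Then x is the unique sparsest representation of u: every vector z ∈ ℂ^N with z ≠ x and Φz = u satisfies |supp(z)| > |supp(x)|. -/
noncomputable section

open Matrix MeasureTheory Finset

namespace SparsityGap

variable {m N : ℕ}

/-- The `j`-th column of the dictionary `Φ`. -/
def col (Φ : Matrix (Fin m) (Fin N) ℂ) (j : Fin N) : Fin m → ℂ := fun i => Φ i j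

/-- The column submatrix `Φ_S` of `Φ` with columns listed in `S`. -/
def sub (Φ : Matrix (Fin m) (Fin N) ℂ) (S : Finset (Fin N)) :
    Matrix (Fin m) {j // j ∈ S} ℂ :=
  Φ.submatrix id (fun j => (j : Fin N))

/-- `range (Φ_S)`: the span of the columns of `Φ` indexed by `S`. -/
def colSpan (Φ : Matrix (Fin m) (Fin N) ℂ) (S : Finset (Fin N)) :
    Submodule ℂ (Fin m → ℂ) :=
  Submodule.span ℂ (Set.range fun j : {j // j ∈ S} => col Φ j)

/-- `S` indexes a linearly independent family of columns of `Φ`. -/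
def LinIndepOn (Φ : Matrix (Fin m) (Fin N) ℂ) (S : Finset (Fin N)) : Prop :=
  LinearIndependent ℂ (fun j : {j // j ∈ S} => col Φ j)

/-- Each column of `Φ` has unit Euclidean norm. -/
def UnitColumns (Φ : Matrix (Fin m) (Fin N) ℂ) : Prop :=
  ∀ j, ∑ i, ‖Φ i j‖ ^ 2 = 1

/-- The coherence of `Φ` (the maximal inner product between distinct columns)
is at most `μ`. -/
def CoherenceLE (Φ : Matrix (Fin m) (Fin N) ℂ) (μ : ℝ) : Prop :=
  ∀ j k, j ≠ k → ‖∑ i, star (Φ i j) * Φ i k‖ ≤ μ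

/-- The ℓ₂ → ℓ₂ operator (spectral) norm of a matrix. -/
def opNorm {α β : Type*} [Fintype α] [Fintype β] [DecidableEq β]
    (A : Matrix α β ℂ) : ℝ :=
  ‖LinearMap.toContinuousLinearMap (Matrix.toEuclideanLin A)‖

/-- The Euclidean norm of a finitely supported vector. -/
def enorm {α : Type*} [Fintype α] (w : α → ℂ) : ℝ :=
  Real.sqrt (∑ j, ‖w j‖ ^ 2)

end SparsityGap

/-!
Write `w = z - x`. It is a nonzero vector in the kernel of `Φ`, and
`|supp w| ≤ |supp z| + |supp x|`, which is at most `2|S| < 1 + 1/μ` if `z` were not less sparse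
than `x`. On the other hand the Gram matrix `Φᴴ Φ` has unit diagonal and off-diagonal entries of
modulus at most `μ`; reading `Φᴴ Φ w = 0` at an entry of `w` of maximal modulus gives
`1 ≤ μ (|supp w| - 1)`, so every nonzero kernel vector has at least `1 + 1/μ` nonzero entries.
-/

namespace SparsityGap

section DiagonalDominance

variable {ι R : Type*} [Fintype ι] [DecidableEq ι] [NormedRing R]

lemma eq_neg_sum_erase_of_mulVec_apply_eq_zero {G : Matrix ι ι R} {w : ι → R} {j : ι}
    (hdiag : G j j = 1) (hGw : (G *ᵥ w) j = 0) :
    w j = -∑ k ∈ univ.erase j, G j k * w k := by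
  rw [mulVec, dotProduct, ← add_sum_erase _ _ (mem_univ j), hdiag, one_mul] at hGw
  exact eq_neg_of_add_eq_zero_left hGw

lemma one_le_mul_ncard_support_sub_one {G : Matrix ι ι R} {μ : ℝ} (hdiag : ∀ j, G j j = 1)
    (hoff : ∀ j k, j ≠ k → ‖G j k‖ ≤ μ) {w : ι → R} (hw : w ≠ 0) (hGw : G *ᵥ w = 0) :
    1 ≤ μ * ((Function.support w).ncard - 1) := by
  classical
  obtain ⟨j, hj⟩ := Function.ne_iff.mp hw
  have : Nonempty ι := ⟨j⟩
  obtain ⟨j, hjmax⟩ := Finite.exists_max fun k => ‖w k‖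
  have hwj : 0 < ‖w j‖ := (norm_pos_iff.mpr hj).trans_le (hjmax _)
  set T := (Function.support w).toFinset
  have hjT : j ∈ T := by simpa [T] using norm_pos_iff.mp hwj
  have hsum : ∑ k ∈ univ.erase j, G j k * w k = ∑ k ∈ T.erase j, G j k * w k := by
    refine (sum_subset (erase_subset_erase _ (subset_univ T)) fun k _ hk => ?_).symm
    simp_all [T]
  have hbound : ‖w j‖ ≤ μ * (T.card - 1) * ‖w j‖ :=
    calc ‖w j‖ = ‖∑ k ∈ T.erase j, G j k * w k‖ := by
          rw [eq_neg_sum_erase_of_mulVec_apply_eq_zero (hdiag j) (congrFun hGw j), norm_neg, hsum]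
      _ ≤ ∑ k ∈ T.erase j, ‖G j k‖ * ‖w k‖ :=
          (norm_sum_le _ _).trans (sum_le_sum fun k _ => norm_mul_le _ _)
      _ ≤ ∑ _k ∈ T.erase j, μ * ‖w j‖ := sum_le_sum fun k hk => by
          have hGjk := hoff j k (ne_of_mem_erase hk).symm
          exact mul_le_mul hGjk (hjmax k) (norm_nonneg _) ((norm_nonneg _).trans hGjk)
      _ = μ * (T.card - 1) * ‖w j‖ := by
          rw [sum_const, card_erase_of_mem hjT, nsmul_eq_mul,
            Nat.cast_sub (card_pos.mpr ⟨j, hjT⟩)]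
          push_cast
          ring
  rw [Set.ncard_eq_toFinset_card']
  nlinarith

end DiagonalDominance

section Dictionary

variable {m N : ℕ} {Φ : Matrix (Fin m) (Fin N) ℂ}

lemma conjTranspose_mul_self_apply_self (hcol : UnitColumns Φ) (j : Fin N) :
    (Φᴴ * Φ) j j = 1 := by
  simp only [mul_apply, conjTranspose_apply, Complex.star_def, Complex.conj_mul']
  exact_mod_cast hcol j

lemma one_add_inv_le_ncard_support_of_mulVec_eq_zero {μ : ℝ} (hcol : UnitColumns Φ)
    (hcoh : CoherenceLE Φ μ) {w : Fin N → ℂ} (hw : w ≠ 0) (hΦw : Φ *ᵥ w = 0) :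
    1 + μ⁻¹ ≤ (Function.support w).ncard := by
  have hdom := one_le_mul_ncard_support_sub_one (conjTranspose_mul_self_apply_self hcol)
    (fun j k hjk => by simpa only [mul_apply, conjTranspose_apply] using hcoh j k hjk) hw
    (by rw [← mulVec_mulVec, hΦw, mulVec_zero])
  have hpos : 0 < (Function.support w).ncard :=
    (Set.ncard_pos (Set.toFinite _)).mpr (Function.support_nonempty_iff.mpr hw)
  rcases le_or_gt μ 0 with hμ | hμ
  · linarith [inv_nonpos.mpr hμ, (Nat.one_le_cast (α := ℝ)).mpr hpos]
  · linarith [(inv_le_iff_one_le_mul₀' hμ).mpr hdom]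

end Dictionary

theorem sparse_representation_unique_general {m N : ℕ} (Φ : Matrix (Fin m) (Fin N) ℂ)
    (μ : ℝ) (hcol : UnitColumns Φ) (hcoh : CoherenceLE Φ μ)
    (S : Finset (Fin N)) (hScard : (S.card : ℝ) < (1 / μ + 1) / 2)
    (x : Fin N → ℂ) (hsupp : Function.support x ⊆ (S : Set (Fin N)))
    (z : Fin N → ℂ) (hz : z ≠ x) (hrep : Φ.mulVec z = Φ.mulVec x) :
    (Function.support x).ncard < (Function.support z).ncard := by
  by_contra! hle
  have hspark := one_add_inv_le_ncard_support_of_mulVec_eq_zero hcol hcoh (sub_ne_zero.mpr hz)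
    (by rw [mulVec_sub, hrep, sub_self])
  have hsupp_sub : (Function.support (z - x)).ncard ≤ (Function.support z).ncard +
      (Function.support x).ncard :=
    (Set.ncard_le_ncard (Function.support_sub z x)).trans (Set.ncard_union_le _ _)
  have hx : (Function.support x).ncard ≤ S.card :=
    (Set.ncard_le_ncard hsupp).trans_eq (Set.ncard_coe_finset S)
  have hwS : ((Function.support (z - x)).ncard : ℝ) ≤ 2 * S.card := by exact_mod_cast by omega
  rw [one_div] at hScard
  linarith

/-- Proposition 1, uniqueness of sparse representations.
If `Φ` has unit-norm columns and coherence at most `μ > 0`, if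
`|S| < (1/2)(μ⁻¹ + 1)`, and if `u = Φ x` with `supp x ⊆ S`, then every other
representation `z` of `u` is strictly less sparse. -/
theorem sparse_representation_unique {m N : ℕ} (Φ : Matrix (Fin m) (Fin N) ℂ)
    (μ : ℝ) (hμ : 0 < μ) (hcol : UnitColumns Φ) (hcoh : CoherenceLE Φ μ)
    (S : Finset (Fin N)) (hScard : (S.card : ℝ) < (1 / μ + 1) / 2)
    (x : Fin N → ℂ) (hsupp : Function.support x ⊆ (S : Set (Fin N)))
    (z : Fin N → ℂ) (hz : z ≠ x) (hrep : Φ.mulVec z = Φ.mulVec x) :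
    (Function.support x).ncard < (Function.support z).ncard :=
  sparse_representation_unique_general Φ μ hcol hcoh S hScard x hsupp z hz hrep

end SparsityGap
end
end

section
/- Let Φ be an m×N complex matrix, and let S and T be sets of column indices, each indexing a linearly independent family of columns; set R = S ∪ T. Then the following are equivalent: (1) for every probability measure ν on ℂ^S that is absolutely continuous with respect to Lebesgue measure, ν{ x ∈ ℂ^S : Φ_S x ∈ range(Φ_T) } = 0; (2) |T| < rank(Φ_R). -/
noncomputable section

open Matrix MeasureTheory Finset

/-! The bad set `{x | Φ_S x ∈ range Φ_T}` is the preimage of a subspace under a linear map, hence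
a subspace of `ℂ^S`. A subspace is null for every absolutely continuous probability measure iff it
is Lebesgue-null, iff it is proper; and it is proper iff `range Φ_S ⊄ range Φ_T`, which, as
`range Φ_T` has dimension `|T|` inside `range Φ_R = range Φ_S ⊔ range Φ_T`, means `|T| < rank Φ_R`. -/

open Module

theorem MeasureTheory.forall_isProbabilityMeasure_absolutelyContinuous_measure_eq_zero_iff
    {α : Type*} [MeasurableSpace α] {μ : Measure α} [SFinite μ] [NeZero μ] {s : Set α} :
    (∀ ν : Measure α, IsProbabilityMeasure ν → ν ≪ μ → ν s = 0) ↔ μ s = 0 :=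
  ⟨fun h => toFinite_apply_eq_zero_iff.mp
      (h _ inferInstance (toFinite_absolutelyContinuous μ)),
    fun h _ _ hν => hν h⟩

theorem MeasureTheory.Measure.addHaar_submodule_eq_zero_iff {𝕜 E : Type*} [Semiring 𝕜]
    [NormedAddCommGroup E] [NormedSpace ℝ E] [Module 𝕜 E] [SMul ℝ 𝕜] [IsScalarTower ℝ 𝕜 E]
    [MeasurableSpace E] [BorelSpace E] [FiniteDimensional ℝ E] (μ : Measure E)
    [μ.IsAddHaarMeasure] (W : Submodule 𝕜 E) : μ W = 0 ↔ W ≠ ⊤ := by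
  refine ⟨fun h hW => ?_, fun hW => ?_⟩
  · rw [hW, Submodule.top_coe, Measure.measure_univ_eq_zero] at h
    exact NeZero.ne μ h
  · simpa using addHaar_submodule μ (W.restrictScalars ℝ)
      ((Submodule.restrictScalars_eq_top_iff ℝ 𝕜 E).not.mpr hW)

theorem Submodule.finrank_lt_finrank_sup_iff {K V : Type*} [DivisionRing K] [AddCommGroup V]
    [Module K V] [FiniteDimensional K V] {p q : Submodule K V} :
    finrank K q < finrank K ↥(p ⊔ q) ↔ ¬ p ≤ q := by
  refine ⟨fun h hpq => ?_, fun h => finrank_lt_finrank_of_lt ?_⟩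
  · rw [sup_eq_right.mpr hpq] at h
    exact lt_irrefl _ h
  · exact lt_of_le_of_ne le_sup_right fun hq => h (hq ▸ le_sup_left)

namespace SparsityGap

section

variable {m N : ℕ} (Φ : Matrix (Fin m) (Fin N) ℂ)

theorem range_mulVecLin_sub (U : Finset (Fin N)) :
    LinearMap.range (sub Φ U).mulVecLin = colSpan Φ U := by
  rw [Matrix.range_mulVecLin]
  rfl

theorem rank_sub (U : Finset (Fin N)) : (sub Φ U).rank = finrank ℂ (colSpan Φ U) := by
  rw [Matrix.rank, range_mulVecLin_sub]

theorem finrank_colSpan {T : Finset (Fin N)} (hT : LinIndepOn Φ T) :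
    finrank ℂ (colSpan Φ T) = T.card := by
  rw [colSpan, finrank_span_eq_card hT, Fintype.card_coe]

theorem colSpan_union (S T : Finset (Fin N)) :
    colSpan Φ (S ∪ T) = colSpan Φ S ⊔ colSpan Φ T := by
  simp only [colSpan, ← Submodule.span_union]
  congr 1
  ext v
  simp [or_and_right, exists_or]

theorem comap_colSpan_eq_top_iff (S T : Finset (Fin N)) :
    (colSpan Φ T).comap (sub Φ S).mulVecLin = ⊤ ↔ colSpan Φ S ≤ colSpan Φ T := by
  rw [← LinearMap.range_le_iff_comap, range_mulVecLin_sub]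

theorem card_lt_rank_sub_union_iff (S : Finset (Fin N)) {T : Finset (Fin N)}
    (hT : LinIndepOn Φ T) :
    T.card < (sub Φ (S ∪ T)).rank ↔ ¬ colSpan Φ S ≤ colSpan Φ T := by
  rw [rank_sub, colSpan_union, ← finrank_colSpan Φ hT, Submodule.finrank_lt_finrank_sup_iff]

end

theorem generic_signal_iff_rank_general {m N : ℕ} (Φ : Matrix (Fin m) (Fin N) ℂ)
    (S T : Finset (Fin N)) (hT : LinIndepOn Φ T) :
    (∀ ν : Measure ({j // j ∈ S} → ℂ), IsProbabilityMeasure ν → ν ≪ volume →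
        ν {x | (sub Φ S).mulVec x ∈ colSpan Φ T} = 0) ↔
      T.card < (sub Φ (S ∪ T)).rank := by
  rw [forall_isProbabilityMeasure_absolutelyContinuous_measure_eq_zero_iff]
  refine (Measure.addHaar_submodule_eq_zero_iff volume
    ((colSpan Φ T).comap (sub Φ S).mulVecLin)).trans ?_
  rw [Ne, comap_colSpan_eq_top_iff, card_lt_rank_sub_union_iff Φ S hT]

/-- Corollary 6.  Suppose `S` and `T` each index a linearly
independent family of columns and `R = S ∪ T`.  Then a generic signal
`u = Φ_S x` almost surely has no representation over `T` if and only if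
`|T| < rank(Φ_R)`. -/
theorem generic_signal_iff_rank {m N : ℕ} (Φ : Matrix (Fin m) (Fin N) ℂ)
    (S T : Finset (Fin N)) (hS : LinIndepOn Φ S) (hT : LinIndepOn Φ T) :
    (∀ ν : Measure ({j // j ∈ S} → ℂ), IsProbabilityMeasure ν → ν ≪ volume →
        ν {x | (sub Φ S).mulVec x ∈ colSpan Φ T} = 0) ↔
      T.card < (sub Φ (S ∪ T)).rank :=
  generic_signal_iff_rank_general Φ S T hT

end SparsityGap
end
end

section
/- Let p and q be real numbers with 0 < p < q. Let A be a complex matrix with singular values σ_1 ≥ σ_2 ≥ … (the nonnegative square roots of the eigenvalues of AᴴA). Then rank(A) ≥ ( (Σ_i σ_i^p)^{1/p} / (Σ_i σ_i^q)^{1/q} )^{pq/(q−p)}, provided A ≠ 0. -/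
noncomputable section

open Matrix MeasureTheory Finset

namespace SparsityGap

/-- The singular values of a matrix `A`: the nonnegative square roots of the
eigenvalues of the Hermitian matrix `AᴴA`. -/
def singVal {m n : ℕ} (A : Matrix (Fin m) (Fin n) ℂ) (i : Fin n) : ℝ :=
  Real.sqrt ((Matrix.isHermitian_conjTranspose_mul_self A).eigenvalues i)

/-! By the power-mean inequality on the support of `x`,
`‖x‖_p ≤ (#supp x) ^ (1/p - 1/q) ‖x‖_q`; raising this to the power `pq/(q-p)` bounds the ratio
by `#supp x`. For the singular values, `#supp` is the number of nonzero eigenvalues of `AᴴA`,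
which is `rank (AᴴA) = rank A`. -/

section SupportBound

variable {ι : Type*} [Fintype ι] {x : ι → ℝ} {p q : ℝ}

theorem sum_rpow_eq_sum_filter_ne_zero (hp : 0 < p) :
    ∑ i, x i ^ p = ∑ i with x i ≠ 0, x i ^ p := by
  refine (Finset.sum_filter_of_ne (p := fun i => x i ≠ 0) fun i _ hi hxi => hi ?_).symm
  rw [hxi, Real.zero_rpow hp.ne']

theorem sum_rpow_rpow_le_card_support_mul (hx : 0 ≤ x) (hp : 0 < p) (hpq : p ≤ q) :
    (∑ i, x i ^ p) ^ (q / p) ≤ (#{i | x i ≠ 0} : ℝ) ^ (q / p - 1) * ∑ i, x i ^ q := by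
  have hq : 0 < q := hp.trans_le hpq
  rw [sum_rpow_eq_sum_filter_ne_zero hp, sum_rpow_eq_sum_filter_ne_zero hq]
  have hpow : ∀ i, (x i ^ p) ^ (q / p) = x i ^ q := fun i => by
    rw [← Real.rpow_mul (hx i), mul_div_cancel₀ q hp.ne']
  simpa only [hpow] using Real.rpow_sum_le_const_mul_sum_rpow_of_nonneg _
    ((one_le_div hp).2 hpq) fun i _ => Real.rpow_nonneg (hx i) p

theorem lp_div_lq_rpow_le_card_support (hx : 0 ≤ x) (hp : 0 < p) (hpq : p < q) :
    ((∑ i, x i ^ p) ^ (1 / p) / (∑ i, x i ^ q) ^ (1 / q)) ^ (p * q / (q - p)) ≤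
      (#{i | x i ≠ 0} : ℝ) := by
  have hq : 0 < q := hp.trans hpq
  have hqp : 0 < q - p := sub_pos.2 hpq
  set a := ∑ i, x i ^ p
  set b := ∑ i, x i ^ q
  set r : ℝ := ((#{i | x i ≠ 0} : ℕ) : ℝ)
  have ha : 0 ≤ a := Finset.sum_nonneg fun i _ => Real.rpow_nonneg (hx i) p
  have hb : 0 ≤ b := Finset.sum_nonneg fun i _ => Real.rpow_nonneg (hx i) q
  have hr : 0 ≤ r := Nat.cast_nonneg _
  rcases hb.eq_or_lt with hb0 | hb0
  · -- then `x = 0` and the ratio is the junk value `0 / 0 = 0`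
    rw [← hb0, Real.zero_rpow (one_div_pos.2 hq).ne', div_zero,
      Real.zero_rpow (by positivity)]
    exact hr
  have hholder : a ^ (q / p) ≤ r ^ (q / p - 1) * b :=
    sum_rpow_rpow_le_card_support_mul hx hp hpq.le
  calc (a ^ (1 / p) / b ^ (1 / q)) ^ (p * q / (q - p))
      = (a ^ (q / p)) ^ (p / (q - p)) / b ^ (p / (q - p)) := by
        rw [Real.div_rpow (by positivity) (by positivity), ← Real.rpow_mul ha,
          ← Real.rpow_mul ha, ← Real.rpow_mul hb]
        congr 2 <;> field_simp
    _ ≤ (r ^ (q / p - 1) * b) ^ (p / (q - p)) / b ^ (p / (q - p)) := by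
        gcongr
    _ = r := by
        rw [Real.mul_rpow (by positivity) hb, ← Real.rpow_mul hr,
          mul_div_cancel_right₀ _ (Real.rpow_pos_of_pos hb0 _).ne',
          show (q / p - 1) * (p / (q - p)) = 1 by field_simp, Real.rpow_one]

end SupportBound

open scoped ComplexOrder in
theorem rank_eq_card_singVal_ne_zero {m n : ℕ} (A : Matrix (Fin m) (Fin n) ℂ) :
    A.rank = #{i | singVal A i ≠ 0} := by
  rw [← rank_conjTranspose_mul_self,
    (isHermitian_conjTranspose_mul_self A).rank_eq_card_non_zero_eigs, Fintype.card_subtype]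
  refine congrArg Finset.card (Finset.filter_congr fun i _ => ?_)
  rw [singVal, Ne, Ne, Real.sqrt_eq_zero (eigenvalues_conjTranspose_mul_self_nonneg A i)]

theorem schatten_ratio_le_rank_general {m n : ℕ} (p q : ℝ) (hp : 0 < p) (hpq : p < q)
    (A : Matrix (Fin m) (Fin n) ℂ) :
    ((∑ i, singVal A i ^ p) ^ (1 / p) / (∑ i, singVal A i ^ q) ^ (1 / q)) ^
        (p * q / (q - p)) ≤ (A.rank : ℝ) := by
  rw [rank_eq_card_singVal_ne_zero]
  exact lp_div_lq_rpow_le_card_support (fun i => Real.sqrt_nonneg _) hp hpq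

/-- Lemma 8, rank bounds via Schatten norm ratios.
For `0 < p < q` and a nonzero matrix `A`,
`rank(A) ≥ (‖A‖_{S_p} / ‖A‖_{S_q}) ^ (pq/(q-p))`. -/
theorem schatten_ratio_le_rank {m n : ℕ} (p q : ℝ) (hp : 0 < p) (hpq : p < q)
    (A : Matrix (Fin m) (Fin n) ℂ) (hA : A ≠ 0) :
    ((∑ i, singVal A i ^ p) ^ (1 / p) / (∑ i, singVal A i ^ q) ^ (1 / q)) ^
        (p * q / (q - p)) ≤ (A.rank : ℝ) :=
  schatten_ratio_le_rank_general p q hp hpq A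

end SparsityGap
end
end

section
/- Let Φ be an m×N complex matrix with unit-norm columns and coherence μ. Let R be a set of r column indices. Then rank(Φ_R) · (1 + (r − 1)μ²) ≥ r; equivalently, rank(Φ_R) ≥ r / (1 + (r − 1)μ²). -/
noncomputable section

open Matrix MeasureTheory Finset

/-! The Gram matrix `G = Φ_Rᴴ Φ_R` has unit diagonal, so `tr G = r`, and `rank G = rank Φ_R`.
Cauchy–Schwarz over the `rank G` nonzero eigenvalues of `G` gives `(tr G)² ≤ rank G · tr G²`,
while coherence bounds `tr G² = ∑ⱼₖ |Gⱼₖ|²` by `r (1 + (r - 1) μ²)`. -/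

namespace Matrix

variable {𝕜 m n : Type*} [RCLike 𝕜] [Fintype n]

theorem trace_conjStarAlgAut [DecidableEq n] (u : unitary (Matrix n n 𝕜)) (X : Matrix n n 𝕜) :
    (Unitary.conjStarAlgAut 𝕜 _ u X).trace = X.trace := by
  rw [Unitary.conjStarAlgAut_apply, trace_mul_cycle, Unitary.coe_star_mul_self, one_mul]

theorem IsHermitian.trace_mul_self_eq_sum_sq_eigenvalues [DecidableEq n] {A : Matrix n n 𝕜}
    (hA : A.IsHermitian) : (A * A).trace = ∑ i, (hA.eigenvalues i : 𝕜) ^ 2 := by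
  conv_lhs => rw [hA.spectral_theorem, ← map_mul, trace_conjStarAlgAut, diagonal_mul_diagonal]
  simp [trace_diagonal, sq]

theorem trace_conjTranspose_mul_self [Fintype m] (A : Matrix m n 𝕜) :
    (Aᴴ * A).trace = ((∑ j, ∑ i, ‖A i j‖ ^ 2 : ℝ) : 𝕜) := by
  simp only [trace, diag, mul_apply, conjTranspose_apply, RCLike.star_def, RCLike.conj_mul]
  push_cast
  rfl

theorem IsHermitian.sq_sum_eigenvalues_le_rank_mul [DecidableEq n] {A : Matrix n n 𝕜}
    (hA : A.IsHermitian) :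
    (∑ i, hA.eigenvalues i) ^ 2 ≤ A.rank * ∑ i, hA.eigenvalues i ^ 2 := by
  classical
  set support := univ.filter fun i => hA.eigenvalues i ≠ 0
  have hcard : support.card = A.rank := by
    rw [hA.rank_eq_card_non_zero_eigs, Fintype.card_subtype]
  calc (∑ i, hA.eigenvalues i) ^ 2 = (∑ i ∈ support, hA.eigenvalues i) ^ 2 := by
        rw [sum_filter_ne_zero]
    _ ≤ support.card * ∑ i ∈ support, hA.eigenvalues i ^ 2 := sq_sum_le_card_mul_sum_sq
    _ ≤ A.rank * ∑ i, hA.eigenvalues i ^ 2 := by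
        rw [hcard]
        refine mul_le_mul_of_nonneg_left ?_ (Nat.cast_nonneg _)
        exact sum_le_sum_of_subset_of_nonneg (filter_subset _ _) fun i _ _ => sq_nonneg _

open scoped ComplexOrder in
theorem sq_re_trace_conjTranspose_mul_self_le [Fintype m] [DecidableEq n] (A : Matrix m n 𝕜) :
    RCLike.re (Aᴴ * A).trace ^ 2 ≤ A.rank * ∑ j, ∑ k, ‖(Aᴴ * A) j k‖ ^ 2 := by
  set G := Aᴴ * A
  have hG : G.IsHermitian := isHermitian_conjTranspose_mul_self A
  have htrace : RCLike.re G.trace = ∑ i, hG.eigenvalues i := by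
    simp [hG.trace_eq_sum_eigenvalues]
  have htrace_sq : ∑ j, ∑ k, ‖G j k‖ ^ 2 = ∑ i, hG.eigenvalues i ^ 2 := by
    have h := hG.trace_mul_self_eq_sum_sq_eigenvalues
    rw [show G * G = Gᴴ * G by rw [hG.eq], trace_conjTranspose_mul_self] at h
    rw [sum_comm]
    exact_mod_cast h
  rw [htrace, htrace_sq, ← rank_conjTranspose_mul_self A]
  exact hG.sq_sum_eigenvalues_le_rank_mul

theorem sum_norm_sq_le_of_diag_of_offDiag (G : Matrix n n 𝕜) {μ : ℝ}
    (hdiag : ∀ j, ‖G j j‖ ≤ 1) (hoff : ∀ j k, j ≠ k → ‖G j k‖ ≤ μ) :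
    ∑ j, ∑ k, ‖G j k‖ ^ 2 ≤ Fintype.card n * (1 + (Fintype.card n - 1) * μ ^ 2) := by
  classical
  have hrow (j : n) : ∑ k, ‖G j k‖ ^ 2 ≤ 1 + (Fintype.card n - 1) * μ ^ 2 := by
    rw [← add_sum_erase _ _ (mem_univ j)]
    have hoff_sum : ∑ k ∈ univ.erase j, ‖G j k‖ ^ 2 ≤ (univ.erase j).card * μ ^ 2 := by
      rw [← nsmul_eq_mul]
      refine sum_le_card_nsmul _ _ _ fun k hk => ?_
      exact pow_le_pow_left₀ (norm_nonneg _) (hoff j k (ne_of_mem_erase hk).symm) 2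
    have hcard : ((univ.erase j).card : ℝ) = Fintype.card n - 1 := by
      rw [card_erase_of_mem (mem_univ j), card_univ,
        Nat.cast_sub (Fintype.card_pos_iff.mpr ⟨j⟩)]
      norm_num
    have hdiag_sq : ‖G j j‖ ^ 2 ≤ 1 := pow_le_one₀ (norm_nonneg _) (hdiag j)
    rw [hcard] at hoff_sum
    linarith
  calc ∑ j, ∑ k, ‖G j k‖ ^ 2 ≤ ∑ _j : n, (1 + (Fintype.card n - 1) * μ ^ 2) :=
        sum_le_sum fun j _ => hrow j
    _ = Fintype.card n * (1 + (Fintype.card n - 1) * μ ^ 2) := by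
        rw [sum_const, card_univ, nsmul_eq_mul]

end Matrix

namespace SparsityGap

theorem gram_sub_apply {m N : ℕ} (Φ : Matrix (Fin m) (Fin N) ℂ) (R : Finset (Fin N))
    (j k : {j // j ∈ R}) :
    ((sub Φ R)ᴴ * sub Φ R) j k = ∑ i, star (Φ i j) * Φ i k := by
  simp [sub, Matrix.mul_apply]

theorem UnitColumns.gram_sub_diag {m N : ℕ} {Φ : Matrix (Fin m) (Fin N) ℂ} (hcol : UnitColumns Φ)
    (R : Finset (Fin N)) (j : {j // j ∈ R}) : ((sub Φ R)ᴴ * sub Φ R) j j = 1 := by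
  rw [gram_sub_apply, ← Complex.ofReal_one, ← hcol j]
  simp only [RCLike.star_def, RCLike.conj_mul]
  push_cast
  rfl

theorem CoherenceLE.norm_gram_sub_le {m N : ℕ} {Φ : Matrix (Fin m) (Fin N) ℂ} {μ : ℝ}
    (hcoh : CoherenceLE Φ μ) (R : Finset (Fin N)) {j k : {j // j ∈ R}} (hjk : j ≠ k) :
    ‖((sub Φ R)ᴴ * sub Φ R) j k‖ ≤ μ := by
  rw [gram_sub_apply]
  exact hcoh j k (Subtype.coe_injective.ne hjk)

theorem rank_submatrix_ge_of_coherence_general {m N : ℕ} (Φ : Matrix (Fin m) (Fin N) ℂ)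
    (μ : ℝ) (hcol : UnitColumns Φ) (hcoh : CoherenceLE Φ μ)
    (R : Finset (Fin N)) :
    (R.card : ℝ) ≤ ((sub Φ R).rank : ℝ) * (1 + ((R.card : ℝ) - 1) * μ ^ 2) := by
  set A := sub Φ R
  have hcard : Fintype.card {j // j ∈ R} = R.card := Fintype.card_coe R
  rcases Nat.eq_zero_or_pos R.card with hempty | hpos
  · have hrank : A.rank = 0 := by
      have := A.rank_le_card_width
      omega
    simp [hempty, hrank]
  have hdiag : ∀ j, (Aᴴ * A) j j = 1 := hcol.gram_sub_diag R
  have htrace : RCLike.re (Aᴴ * A).trace = R.card := by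
    simp [Matrix.trace, hdiag]
  have hfrob := (Aᴴ * A).sum_norm_sq_le_of_diag_of_offDiag
    (fun j => by rw [hdiag, norm_one]) fun _ _ => hcoh.norm_gram_sub_le R
  rw [hcard] at hfrob
  refine le_of_mul_le_mul_left ?_ (Nat.cast_pos.mpr hpos : (0 : ℝ) < R.card)
  calc (R.card : ℝ) * R.card = RCLike.re (Aᴴ * A).trace ^ 2 := by rw [htrace, sq]
    _ ≤ A.rank * ∑ j, ∑ k, ‖(Aᴴ * A) j k‖ ^ 2 := A.sq_re_trace_conjTranspose_mul_self_le
    _ ≤ A.rank * (R.card * (1 + (R.card - 1) * μ ^ 2)) := by gcongr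
    _ = R.card * (A.rank * (1 + (R.card - 1) * μ ^ 2)) := by ring

/-- Lemma 10.  If `Φ` has unit-norm columns and coherence at
most `μ`, then for any set `R` of `r` columns,
`rank(Φ_R) · (1 + (r − 1)μ²) ≥ r`, i.e. `rank(Φ_R) ≥ r / (1 + (r − 1)μ²)`. -/
theorem rank_submatrix_ge_of_coherence {m N : ℕ} (Φ : Matrix (Fin m) (Fin N) ℂ)
    (μ : ℝ) (hμ : 0 ≤ μ) (hcol : UnitColumns Φ) (hcoh : CoherenceLE Φ μ)
    (R : Finset (Fin N)) :
    (R.card : ℝ) ≤ ((sub Φ R).rank : ℝ) * (1 + ((R.card : ℝ) - 1) * μ ^ 2) :=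
  rank_submatrix_ge_of_coherence_general Φ μ hcol hcoh R

end SparsityGap
end
end

section
/- Let Φ be an m×N complex matrix with unit-norm columns and coherence μ. Let S index a linearly independent family of s columns, let T be a set of t column indices with tμ² < 1, and let δ = |S ∩ T|. Assume δ < s·(1 − ((t−1)/s)·(tμ²/(1 − tμ²))). Then for every probability measure ν on ℂ^S absolutely continuous with respect to Lebesgue measure, ν{ x ∈ ℂ^S : Φ_S x ∈ range(Φ_T) } = 0; that is, a generic signal in range(Φ_S) almost surely cannot be represented using the columns in T. -/
noncomputable section

open Matrix MeasureTheory Finset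

/-!
If every column of `Φ_S` lay in `range(Φ_T)`, the `n = s + t - δ` unit columns indexed by `S ∪ T`
would live in a space of dimension `r ≤ t`. Their frame potential `∑ⱼₖ |⟨φⱼ, φₖ⟩|²` is at least
`n² / r` (Cauchy–Schwarz on the diagonal of the frame operator), while coherence bounds it by
`n (1 + (n - 1) μ²)`. Hence `n ≤ t (1 + (n - 1) μ²)`, which the hypothesis on `δ` forbids.
So some column of `Φ_S` escapes `range(Φ_T)`, the set of bad coefficient vectors is a proper
subspace of `ℂ^S`, and proper subspaces are Lebesgue-null.
-/

open scoped InnerProductSpace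

section FramePotential

variable {𝕜 : Type*} [RCLike 𝕜] {ι κ : Type*} [Fintype ι]

theorem Matrix.mul_conjTranspose_self_apply_self (B : Matrix κ ι 𝕜) (l : κ) :
    (B * Bᴴ) l l = ((∑ j, ‖B l j‖ ^ 2 : ℝ) : 𝕜) := by
  simp [Matrix.mul_apply, RCLike.star_def, RCLike.mul_conj]

variable [Fintype κ]

theorem Matrix.trace_mul_conjTranspose_self (B : Matrix κ ι 𝕜) :
    (B * Bᴴ).trace = ((∑ l, ∑ j, ‖B l j‖ ^ 2 : ℝ) : 𝕜) := by
  simp [Matrix.trace, Matrix.mul_conjTranspose_self_apply_self]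

theorem Matrix.sum_sq_norm_mul_conjTranspose_self (B : Matrix κ ι 𝕜) :
    ∑ l, ∑ l', ‖(B * Bᴴ) l l'‖ ^ 2 = ∑ j, ∑ k, ‖(Bᴴ * B) j k‖ ^ 2 := by
  have hleft := Matrix.trace_mul_conjTranspose_self (B * Bᴴ)
  have hright := Matrix.trace_mul_conjTranspose_self (Bᴴ * B)
  simp only [Matrix.conjTranspose_mul, Matrix.conjTranspose_conjTranspose] at hleft hright
  have htrace : (B * Bᴴ * (B * Bᴴ)).trace = (Bᴴ * B * (Bᴴ * B)).trace := by
    simp only [Matrix.mul_assoc]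
    rw [Matrix.trace_mul_comm]
    simp only [Matrix.mul_assoc]
  exact_mod_cast hleft.symm.trans (htrace.trans hright)

theorem Matrix.sq_sum_sq_norm_le_card_mul_sum_sq_norm_conjTranspose_mul_self
    (B : Matrix κ ι 𝕜) :
    (∑ l, ∑ j, ‖B l j‖ ^ 2) ^ 2 ≤ Fintype.card κ * ∑ j, ∑ k, ‖(Bᴴ * B) j k‖ ^ 2 := by
  set d : κ → ℝ := fun l ↦ ∑ j, ‖B l j‖ ^ 2
  have hdiag (l : κ) : d l ^ 2 ≤ ∑ l', ‖(B * Bᴴ) l l'‖ ^ 2 := by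
    have : d l ^ 2 = ‖(B * Bᴴ) l l‖ ^ 2 := by
      rw [Matrix.mul_conjTranspose_self_apply_self, RCLike.norm_ofReal, sq_abs]
    exact this ▸ Finset.single_le_sum (fun l' _ ↦ sq_nonneg ‖(B * Bᴴ) l l'‖) (Finset.mem_univ l)
  calc (∑ l, d l) ^ 2 ≤ Fintype.card κ * ∑ l, d l ^ 2 := by
        simpa using sq_sum_le_card_mul_sum_sq (s := Finset.univ) (f := d)
    _ ≤ Fintype.card κ * ∑ l, ∑ l', ‖(B * Bᴴ) l l'‖ ^ 2 := by
        gcongr with l; exact hdiag l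
    _ = Fintype.card κ * ∑ j, ∑ k, ‖(Bᴴ * B) j k‖ ^ 2 := by
        rw [Matrix.sum_sq_norm_mul_conjTranspose_self]

end FramePotential

section Coherence

variable {𝕜 E ι : Type*} [RCLike 𝕜] [NormedAddCommGroup E] [InnerProductSpace 𝕜 E] [Fintype ι]

theorem sq_sum_sq_norm_le_finrank_mul_sum_sq_norm_inner [FiniteDimensional 𝕜 E] (ψ : ι → E) :
    (∑ j, ‖ψ j‖ ^ 2) ^ 2 ≤ Module.finrank 𝕜 E * ∑ j, ∑ k, ‖⟪ψ j, ψ k⟫_𝕜‖ ^ 2 := by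
  let b := stdOrthonormalBasis 𝕜 E
  let B : Matrix (Fin (Module.finrank 𝕜 E)) ι 𝕜 := Matrix.of fun l j ↦ b.repr (ψ j) l
  have hgram : Matrix.gram 𝕜 ψ = Bᴴ * B := Matrix.gram_eq_conjTranspose_mul b ψ
  have hnorm (j : ι) : ∑ l, ‖B l j‖ ^ 2 = ‖ψ j‖ ^ 2 := by
    simp [B, b.repr_apply_apply, b.sum_sq_norm_inner_right]
  have := B.sq_sum_sq_norm_le_card_mul_sum_sq_norm_conjTranspose_mul_self
  rw [Finset.sum_comm, ← hgram, Fintype.card_fin] at this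
  simpa only [hnorm, Matrix.gram_apply] using this

theorem sum_sq_norm_inner_le_of_coherence {μ : ℝ} (ψ : ι → E) (hnorm : ∀ j, ‖ψ j‖ = 1)
    (hcoh : ∀ j k, j ≠ k → ‖⟪ψ j, ψ k⟫_𝕜‖ ≤ μ) :
    ∑ j, ∑ k, ‖⟪ψ j, ψ k⟫_𝕜‖ ^ 2 ≤ Fintype.card ι * (1 + (Fintype.card ι - 1) * μ ^ 2) := by
  classical
  have hrow (j : ι) : ∑ k, ‖⟪ψ j, ψ k⟫_𝕜‖ ^ 2 ≤ 1 + (Fintype.card ι - 1) * μ ^ 2 := by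
    rw [← Finset.add_sum_erase _ _ (Finset.mem_univ j)]
    have hself : ‖⟪ψ j, ψ j⟫_𝕜‖ ^ 2 = 1 := by simp [inner_self_eq_norm_sq_to_K, hnorm]
    have hoff : ∑ k ∈ Finset.univ.erase j, ‖⟪ψ j, ψ k⟫_𝕜‖ ^ 2 ≤ (Fintype.card ι - 1) * μ ^ 2 := by
      have := Finset.sum_le_card_nsmul (Finset.univ.erase j) _ (μ ^ 2) fun k hk ↦
        pow_le_pow_left₀ (norm_nonneg _) (hcoh j k (Finset.ne_of_mem_erase hk).symm) 2
      rwa [Finset.card_erase_of_mem (Finset.mem_univ j), nsmul_eq_mul, Finset.card_univ,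
        Nat.cast_pred (Fintype.card_pos_iff.2 ⟨j⟩)] at this
    linarith
  calc ∑ j, ∑ k, ‖⟪ψ j, ψ k⟫_𝕜‖ ^ 2 ≤ ∑ _j : ι, (1 + (Fintype.card ι - 1) * μ ^ 2) :=
        Finset.sum_le_sum fun j _ ↦ hrow j
    _ = Fintype.card ι * (1 + (Fintype.card ι - 1) * μ ^ 2) := by
        rw [Finset.sum_const, Finset.card_univ, nsmul_eq_mul]

theorem card_le_finrank_mul_of_coherence [Nonempty ι] [FiniteDimensional 𝕜 E] {μ : ℝ}
    (ψ : ι → E) (hnorm : ∀ j, ‖ψ j‖ = 1) (hcoh : ∀ j k, j ≠ k → ‖⟪ψ j, ψ k⟫_𝕜‖ ≤ μ) :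
    (Fintype.card ι : ℝ) ≤ Module.finrank 𝕜 E * (1 + (Fintype.card ι - 1) * μ ^ 2) := by
  have hpotential := sq_sum_sq_norm_le_finrank_mul_sum_sq_norm_inner (𝕜 := 𝕜) ψ
  have hgram := sum_sq_norm_inner_le_of_coherence ψ hnorm hcoh
  simp only [hnorm, one_pow, Finset.sum_const, Finset.card_univ, nsmul_one] at hpotential
  have hn : (0 : ℝ) < Fintype.card ι := Nat.cast_pos.2 Fintype.card_pos
  have := hpotential.trans (mul_le_mul_of_nonneg_left hgram (Nat.cast_nonneg _))
  nlinarith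

theorem card_le_finrank_mul_of_coherence_of_mem [Nonempty ι] (V : Submodule 𝕜 E)
    [FiniteDimensional 𝕜 V] {μ : ℝ} {ψ : ι → E} (hV : ∀ j, ψ j ∈ V) (hnorm : ∀ j, ‖ψ j‖ = 1)
    (hcoh : ∀ j k, j ≠ k → ‖⟪ψ j, ψ k⟫_𝕜‖ ≤ μ) :
    (Fintype.card ι : ℝ) ≤ Module.finrank 𝕜 V * (1 + (Fintype.card ι - 1) * μ ^ 2) :=
  card_le_finrank_mul_of_coherence (fun j ↦ (⟨ψ j, hV j⟩ : V)) hnorm hcoh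

end Coherence

theorem lt_of_sparsity_gap {s t δ μ : ℝ} (hs : s ≠ 0) (htμ : t * μ ^ 2 < 1)
    (hδ : δ < s * (1 - ((t - 1) / s) * (t * μ ^ 2 / (1 - t * μ ^ 2)))) :
    t * (1 + (s + t - δ - 1) * μ ^ 2) < s + t - δ := by
  -- cleared of denominators, `hδ` reads `t (t - 1) μ² < (s - δ) (1 - t μ²)`
  have hpos : 0 < 1 - t * μ ^ 2 := by linarith
  rw [mul_sub, mul_one, ← mul_assoc, mul_div_cancel₀ _ hs, mul_div_assoc', lt_sub_iff_add_lt,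
    ← lt_sub_iff_add_lt', div_lt_iff₀ hpos] at hδ
  nlinarith

theorem MeasureTheory.Measure.addHaar_submodule_complex {E : Type*} [NormedAddCommGroup E]
    [NormedSpace ℝ E] [Module ℂ E] [IsScalarTower ℝ ℂ E] [MeasurableSpace E] [BorelSpace E]
    [FiniteDimensional ℝ E] (μ : Measure E) [μ.IsAddHaarMeasure] (W : Submodule ℂ E)
    (hW : W ≠ ⊤) : μ W = 0 :=
  Measure.addHaar_submodule μ (W.restrictScalars ℝ)
    (by rwa [Ne, Submodule.restrictScalars_eq_top_iff])

namespace SparsityGap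

variable {m N : ℕ}

def colVec (Φ : Matrix (Fin m) (Fin N) ℂ) (j : Fin N) : EuclideanSpace ℂ (Fin m) :=
  WithLp.toLp 2 (col Φ j)

theorem norm_colVec {Φ : Matrix (Fin m) (Fin N) ℂ} (hcol : UnitColumns Φ) (j : Fin N) :
    ‖colVec Φ j‖ = 1 := by
  simp [EuclideanSpace.norm_eq, colVec, col, hcol j]

theorem inner_colVec (Φ : Matrix (Fin m) (Fin N) ℂ) (j k : Fin N) :
    ⟪colVec Φ j, colVec Φ k⟫_ℂ = ∑ i, star (Φ i j) * Φ i k := by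
  simp [colVec, col, PiLp.inner_apply, mul_comm]

theorem sub_mulVec_single (Φ : Matrix (Fin m) (Fin N) ℂ) (S : Finset (Fin N)) (j : S) :
    sub Φ S *ᵥ Pi.single j 1 = col Φ j := by
  ext i
  simp [sub, col, Matrix.mulVec_single]

theorem finrank_colSpan_le (Φ : Matrix (Fin m) (Fin N) ℂ) (T : Finset (Fin N)) :
    Module.finrank ℂ (colSpan Φ T) ≤ T.card :=
  (finrank_range_le_card _).trans_eq (Fintype.card_coe T)

theorem exists_col_notMem_colSpan {Φ : Matrix (Fin m) (Fin N) ℂ} {μ : ℝ}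
    (hcol : UnitColumns Φ) (hcoh : CoherenceLE Φ μ) {S T : Finset (Fin N)}
    (htμ : (T.card : ℝ) * μ ^ 2 < 1)
    (hδ : ((S ∩ T).card : ℝ) <
      (S.card : ℝ) * (1 - (((T.card : ℝ) - 1) / (S.card : ℝ)) *
        ((T.card : ℝ) * μ ^ 2 / (1 - (T.card : ℝ) * μ ^ 2)))) :
    ∃ j ∈ S, col Φ j ∉ colSpan Φ T := by
  by_contra! hall
  have hS : S.Nonempty := by
    rw [Finset.nonempty_iff_ne_empty]
    rintro rfl
    simp at hδ
  have : Nonempty (S ∪ T : Finset (Fin N)) := (hS.mono Finset.subset_union_left).to_subtype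
  let V := (colSpan Φ T).map (WithLp.linearEquiv 2 ℂ (Fin m → ℂ)).symm.toLinearMap
  have hV (j : (S ∪ T : Finset (Fin N))) : colVec Φ j ∈ V := by
    refine Submodule.mem_map_of_mem ?_
    rcases Finset.mem_union.1 j.2 with hjS | hjT
    · exact hall j hjS
    · exact Submodule.subset_span ⟨⟨j, hjT⟩, rfl⟩
  have hwelch := card_le_finrank_mul_of_coherence_of_mem V hV (fun j ↦ norm_colVec hcol j)
    fun j k hjk ↦ inner_colVec Φ j k ▸ hcoh j k (Subtype.coe_injective.ne hjk)
  have hrank : (Module.finrank ℂ V : ℝ) ≤ T.card := by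
    rw [LinearEquiv.finrank_map_eq]
    exact_mod_cast finrank_colSpan_le Φ T
  have hcard : (Fintype.card (S ∪ T : Finset (Fin N)) : ℝ) = S.card + T.card - (S ∩ T).card := by
    rw [Fintype.card_coe, eq_sub_iff_add_eq]
    exact_mod_cast Finset.card_union_add_card_inter S T
  have hfactor : 0 ≤ 1 + ((Fintype.card (S ∪ T : Finset (Fin N)) : ℝ) - 1) * μ ^ 2 := by
    have : (1 : ℝ) ≤ Fintype.card (S ∪ T : Finset (Fin N)) := Nat.one_le_cast.2 Fintype.card_pos
    nlinarith [sq_nonneg μ]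
  have hbound := hwelch.trans (mul_le_mul_of_nonneg_right hrank hfactor)
  have hgap := lt_of_sparsity_gap (Nat.cast_ne_zero.2 hS.card_pos.ne') htμ hδ
  rw [hcard] at hbound
  linarith

theorem sparsity_gap_strong_incoherence_general {m N : ℕ}
    (Φ : Matrix (Fin m) (Fin N) ℂ) (μ : ℝ)
    (hcol : UnitColumns Φ) (hcoh : CoherenceLE Φ μ)
    (S T : Finset (Fin N))
    (htμ : (T.card : ℝ) * μ ^ 2 < 1)
    (hδ : ((S ∩ T).card : ℝ) <
      (S.card : ℝ) * (1 - (((T.card : ℝ) - 1) / (S.card : ℝ)) *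
        ((T.card : ℝ) * μ ^ 2 / (1 - (T.card : ℝ) * μ ^ 2))))
    (ν : Measure ({j // j ∈ S} → ℂ))
    (hac : ν ≪ volume) :
    ν {x | (sub Φ S).mulVec x ∈ colSpan Φ T} = 0 := by
  obtain ⟨j, hjS, hj⟩ := exists_col_notMem_colSpan hcol hcoh htμ hδ
  have hproper : (colSpan Φ T).comap (sub Φ S).mulVecLin ≠ ⊤ := by
    intro htop
    have hmem : Pi.single ⟨j, hjS⟩ 1 ∈ (colSpan Φ T).comap (sub Φ S).mulVecLin :=
      htop ▸ Submodule.mem_top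
    exact hj (sub_mulVec_single Φ S ⟨j, hjS⟩ ▸ hmem)
  exact hac (Measure.addHaar_submodule_complex volume _ hproper)

/-- Theorem 11.  Let `Φ` have unit-norm columns and
coherence at most `μ`.  Let `S` index a linearly independent family of `s`
columns, let `T` be a set of `t` columns with `tμ² < 1`, and let
`δ = |S ∩ T|`.  If `δ < s(1 − ((t−1)/s)·(tμ²/(1 − tμ²)))`, then a generic
signal in `range(Φ_S)` almost surely cannot be represented using the columns
in `T`. -/
theorem sparsity_gap_strong_incoherence {m N : ℕ}
    (Φ : Matrix (Fin m) (Fin N) ℂ) (μ : ℝ) (hμ : 0 ≤ μ)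
    (hcol : UnitColumns Φ) (hcoh : CoherenceLE Φ μ)
    (S T : Finset (Fin N)) (hS : LinIndepOn Φ S)
    (htμ : (T.card : ℝ) * μ ^ 2 < 1)
    (hδ : ((S ∩ T).card : ℝ) <
      (S.card : ℝ) * (1 - (((T.card : ℝ) - 1) / (S.card : ℝ)) *
        ((T.card : ℝ) * μ ^ 2 / (1 - (T.card : ℝ) * μ ^ 2))))
    (ν : Measure ({j // j ∈ S} → ℂ)) (hν : IsProbabilityMeasure ν)
    (hac : ν ≪ volume) :
    ν {x | (sub Φ S).mulVec x ∈ colSpan Φ T} = 0 :=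
  sparsity_gap_strong_incoherence_general Φ μ hcol hcoh S T htμ hδ ν hac

end SparsityGap
end
end

section
/- Let Φ be an m×N complex matrix with unit-norm columns that is a tight frame with ‖Φ‖² = N/m. Let S index a linearly independent family of s columns such that ‖(Φ_SᴴΦ_S)⁻¹Φ_Sᴴ‖ ≤ √2 and max_{v ∉ S} ‖Φ_Sᴴ φ_v‖₂ ≤ 1/2. Let T be a set of t column indices with overlap δ = |S ∩ T|, and assume t < (s − δ·m/(2N)) · (1 − m/(2N))⁻¹. Then for every probability measure ν on ℂ^S absolutely continuous with respect to Lebesgue measure, ν{ x ∈ ℂ^S : Φ_S x ∈ range(Φ_T) } = 0; that is, a generic signal in range(Φ_S) almost surely cannot be represented using the columns in T. -/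
noncomputable section

open Matrix MeasureTheory Finset

namespace SparsityGap

/-- The pseudoinverse `Φ_S† = (Φ_Sᴴ Φ_S)⁻¹ Φ_Sᴴ` of `Φ_S`. -/
def pinv {m N : ℕ} (Φ : Matrix (Fin m) (Fin N) ℂ) (S : Finset (Fin N)) :
    Matrix {j // j ∈ S} (Fin m) ℂ :=
  ((sub Φ S)ᴴ * sub Φ S)⁻¹ * (sub Φ S)ᴴ

end SparsityGap

/-!
The coefficient vectors `x` with `Φ_S x ∈ range Φ_T` form a subspace, which is Lebesgue-null,
hence `ν`-null, unless it is everything. So it suffices to rule out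
`K := range Φ_S ⊆ L := range Φ_T`.

For a unit-norm tight frame with bound `c = N/m`, `∑_v ‖P_W φ_v‖² ≤ c · dim W` for every
subspace `W` (expand `‖P_W φ_v‖²` in an orthonormal basis of `W` and swap the sums); applied
to `Kᗮ`, together with `∑_v ‖φ_v‖² = N = c m`, this gives `∑_v ‖P_K φ_v‖² ≥ c s`. Pointwise
`‖P_K φ_v‖ ≤ ‖P_L φ_v‖` since `K ⊆ L`, and for `v ∈ T \ S` the gap is at least `1/2`: there
`‖P_L φ_v‖ = 1`, while `‖P_K φ_v‖ ≤ ‖Φ_S†‖ ‖Φ_Sᴴ φ_v‖ ≤ √2 / 2`. Summing,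
`c s + (t - δ)/2 ≤ c · dim L ≤ c t`, which contradicts the bound on `t`.
-/

section Frame

variable {𝕜 E ι : Type*} [RCLike 𝕜] [NormedAddCommGroup E] [InnerProductSpace 𝕜 E]
  [Fintype ι]

local notation "⟪" x ", " y "⟫" => inner 𝕜 x y

theorem Submodule.norm_starProjection_sq_eq_sum (K : Submodule 𝕜 E) [FiniteDimensional 𝕜 K]
    {κ : Type*} [Fintype κ] (b : OrthonormalBasis κ 𝕜 K) (x : E) :
    ‖K.starProjection x‖ ^ 2 = ∑ k, ‖⟪x, (b k : E)⟫‖ ^ 2 := by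
  simp_rw [← K.inner_orthogonalProjectionOnto_eq_of_mem_right, b.sum_sq_norm_inner_left]
  rfl

theorem Submodule.norm_starProjection_le_of_le {K L : Submodule 𝕜 E}
    [K.HasOrthogonalProjection] [L.HasOrthogonalProjection] (h : K ≤ L) (x : E) :
    ‖K.starProjection x‖ ≤ ‖L.starProjection x‖ := by
  rw [← Submodule.starProjection_comp_starProjection_of_le h, ContinuousLinearMap.comp_apply]
  exact K.norm_starProjection_apply_le _

theorem sum_norm_starProjection_sq_le {φ : ι → E} {c : ℝ}
    (hframe : ∀ x, ∑ v, ‖⟪φ v, x⟫‖ ^ 2 ≤ c * ‖x‖ ^ 2)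
    (K : Submodule 𝕜 E) [FiniteDimensional 𝕜 K] :
    ∑ v, ‖K.starProjection (φ v)‖ ^ 2 ≤ c * Module.finrank 𝕜 K := by
  let b := stdOrthonormalBasis 𝕜 K
  calc ∑ v, ‖K.starProjection (φ v)‖ ^ 2 = ∑ k, ∑ v, ‖⟪φ v, (b k : E)⟫‖ ^ 2 := by
        rw [Finset.sum_comm]
        exact Finset.sum_congr rfl fun v _ => K.norm_starProjection_sq_eq_sum b (φ v)
    _ ≤ ∑ k, c * ‖(b k : E)‖ ^ 2 := Finset.sum_le_sum fun k _ => hframe _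
    _ = c * Module.finrank 𝕜 K := by
        simp only [show ∀ k, ‖(b k : E)‖ = 1 from b.orthonormal.1]
        simp [mul_comm]

theorem le_sum_norm_starProjection_sq [FiniteDimensional 𝕜 E] {φ : ι → E} {c : ℝ}
    (hframe : ∀ x, ∑ v, ‖⟪φ v, x⟫‖ ^ 2 ≤ c * ‖x‖ ^ 2)
    (hsum : ∑ v, ‖φ v‖ ^ 2 = c * Module.finrank 𝕜 E) (K : Submodule 𝕜 E) :
    c * Module.finrank 𝕜 K ≤ ∑ v, ‖K.starProjection (φ v)‖ ^ 2 := by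
  have hsplit : ∑ v, ‖φ v‖ ^ 2
      = ∑ v, ‖K.starProjection (φ v)‖ ^ 2 + ∑ v, ‖Kᗮ.starProjection (φ v)‖ ^ 2 := by
    rw [← Finset.sum_add_distrib]
    exact Finset.sum_congr rfl fun v _ => K.norm_sq_eq_add_norm_sq_starProjection (φ v)
  have hdim : (Module.finrank 𝕜 K : ℝ) + Module.finrank 𝕜 Kᗮ = Module.finrank 𝕜 E := by
    exact_mod_cast K.finrank_add_finrank_orthogonal
  linear_combination hsplit - hsum + sum_norm_starProjection_sq_le hframe Kᗮ + c * hdim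

theorem one_le_of_frame_bound {φ : ι → E} {c : ℝ} {v₀ : ι} (hv₀ : ‖φ v₀‖ = 1)
    (hframe : ∀ x, ∑ v, ‖⟪φ v, x⟫‖ ^ 2 ≤ c * ‖x‖ ^ 2) : 1 ≤ c := by
  have h := (Finset.single_le_sum (f := fun v => ‖⟪φ v, φ v₀⟫‖ ^ 2)
    (fun _ _ => by positivity) (Finset.mem_univ v₀)).trans (hframe (φ v₀))
  simpa [inner_self_eq_norm_sq_to_K, hv₀] using h

theorem mul_finrank_add_card_div_two_le [FiniteDimensional 𝕜 E] {φ : ι → E} {c : ℝ}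
    (hunit : ∀ v, ‖φ v‖ = 1) (hcard : c * Module.finrank 𝕜 E = Fintype.card ι)
    (hframe : ∀ x, ∑ v, ‖⟪φ v, x⟫‖ ^ 2 ≤ c * ‖x‖ ^ 2)
    {K L : Submodule 𝕜 E} (hKL : K ≤ L) (R : Finset ι)
    (hR : ∀ v ∈ R, φ v ∈ L ∧ ‖K.starProjection (φ v)‖ ^ 2 ≤ 1 / 2) :
    c * Module.finrank 𝕜 K + R.card / 2 ≤ c * Module.finrank 𝕜 L := by
  classical
  have hsum : ∑ v, ‖φ v‖ ^ 2 = c * Module.finrank 𝕜 E := by simp [hunit, hcard]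
  have hpointwise : ∀ v, ‖K.starProjection (φ v)‖ ^ 2 + (if v ∈ R then 1 / 2 else 0)
      ≤ ‖L.starProjection (φ v)‖ ^ 2 := by
    intro v
    split_ifs with hv
    · rw [L.starProjection_eq_self_iff.2 (hR v hv).1, hunit]
      linarith [(hR v hv).2]
    · rw [add_zero]
      exact pow_le_pow_left₀ (norm_nonneg _) (K.norm_starProjection_le_of_le hKL _) 2
  calc c * Module.finrank 𝕜 K + R.card / 2
      ≤ ∑ v, (‖K.starProjection (φ v)‖ ^ 2 + (if v ∈ R then 1 / 2 else 0)) := by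
        rw [Finset.sum_add_distrib, Finset.sum_ite_mem, Finset.univ_inter]
        simp only [Finset.sum_const, nsmul_eq_mul]
        linarith [le_sum_norm_starProjection_sq hframe hsum K]
    _ ≤ ∑ v, ‖L.starProjection (φ v)‖ ^ 2 := Finset.sum_le_sum fun v _ => hpointwise v
    _ ≤ c * Module.finrank 𝕜 L := sum_norm_starProjection_sq_le hframe L

theorem sum_norm_inner_apply_single_sq_le [DecidableEq ι] [CompleteSpace E]
    (A : EuclideanSpace 𝕜 ι →L[𝕜] E) (x : E) :
    ∑ v, ‖⟪A (EuclideanSpace.single v 1), x⟫‖ ^ 2 ≤ ‖A‖ ^ 2 * ‖x‖ ^ 2 := by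
  have hcoord : ∀ v, ⟪A (EuclideanSpace.single v 1), x⟫ = A.adjoint x v := fun v => by
    rw [← ContinuousLinearMap.adjoint_inner_right, EuclideanSpace.inner_single_left]
    simp
  simp_rw [hcoord, ← EuclideanSpace.norm_sq_eq, ← mul_pow]
  gcongr
  calc ‖A.adjoint x‖ ≤ ‖A.adjoint‖ * ‖x‖ := A.adjoint.le_opNorm x
    _ = ‖A‖ * ‖x‖ := by rw [LinearIsometryEquiv.norm_map]

/-- Writing `P x = A a`, one has `‖P x‖² = re ⟪a, A† x⟫` and `a = B (P x)`. -/
theorem norm_starProjection_range_le {F : Type*} [NormedAddCommGroup F]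
    [InnerProductSpace 𝕜 F] [CompleteSpace E] [CompleteSpace F] (A : F →L[𝕜] E) (B : E →L[𝕜] F)
    (hBA : ∀ y, B (A y) = y) [A.range.HasOrthogonalProjection] (x : E) :
    ‖A.range.starProjection x‖ ≤ ‖B‖ * ‖A.adjoint x‖ := by
  set p := A.range.starProjection x
  obtain ⟨a, ha⟩ : p ∈ A.range := Submodule.starProjection_apply_mem _ x
  replace ha : A a = p := ha
  have hnorm_a : ‖a‖ ≤ ‖B‖ * ‖p‖ := by simpa [← ha, hBA] using B.le_opNorm p
  have hsq : ‖p‖ * ‖p‖ ≤ ‖p‖ * (‖B‖ * ‖A.adjoint x‖) :=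
    calc ‖p‖ * ‖p‖ = RCLike.re ⟪p, x⟫ := by
          rw [Submodule.re_inner_starProjection_eq_normSq, sq]; rfl
      _ = RCLike.re ⟪a, A.adjoint x⟫ := by rw [ContinuousLinearMap.adjoint_inner_right, ha]
      _ ≤ ‖a‖ * ‖A.adjoint x‖ := re_inner_le_norm _ _
      _ ≤ ‖B‖ * ‖p‖ * ‖A.adjoint x‖ := by gcongr
      _ = ‖p‖ * (‖B‖ * ‖A.adjoint x‖) := by ring
  rcases (norm_nonneg p).eq_or_lt with hp | hp
  · rw [← hp]; positivity
  · exact le_of_mul_le_mul_left hsq hp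

end Frame

theorem MeasureTheory.Measure.addHaar_preimage_submodule_eq_zero {V F : Type*}
    [NormedAddCommGroup V] [NormedSpace ℂ V] [MeasurableSpace V] [BorelSpace V]
    [FiniteDimensional ℂ V] (μ : Measure V) [μ.IsAddHaarMeasure] [AddCommGroup F] [Module ℂ F]
    (f : V →ₗ[ℂ] F) (L : Submodule ℂ F) (h : ¬ LinearMap.range f ≤ L) :
    μ (f ⁻¹' L) = 0 := by
  refine Measure.addHaar_submodule μ ((L.comap f).restrictScalars ℝ) fun htop => h ?_
  rwa [LinearMap.range_le_iff_comap, ← Submodule.restrictScalars_eq_top_iff ℝ]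

namespace SparsityGap

variable {m N : ℕ}

theorem toEuclideanLin_single (Φ : Matrix (Fin m) (Fin N) ℂ) (v : Fin N) :
    toEuclideanLin Φ (EuclideanSpace.single v 1) = WithLp.toLp 2 (col Φ v) := by
  ext i
  simp [col]

theorem enorm_eq_norm_toLp {α : Type*} [Fintype α] (w : α → ℂ) :
    enorm w = ‖WithLp.toLp 2 w‖ := by
  rw [EuclideanSpace.norm_eq]
  rfl

open scoped ComplexOrder in
theorem pinv_mul_sub {Φ : Matrix (Fin m) (Fin N) ℂ} {S : Finset (Fin N)} (hS : LinIndepOn Φ S) :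
    pinv Φ S * sub Φ S = 1 := by
  have hgram : IsUnit ((sub Φ S)ᴴ * sub Φ S) :=
    (PosDef.conjTranspose_mul_self _ (mulVec_injective_iff.2 hS)).isUnit
  rw [pinv, Matrix.mul_assoc, nonsing_inv_mul _ ((isUnit_iff_isUnit_det _).1 hgram)]

def subCLM (Φ : Matrix (Fin m) (Fin N) ℂ) (S : Finset (Fin N)) :
    EuclideanSpace ℂ {j // j ∈ S} →L[ℂ] EuclideanSpace ℂ (Fin m) :=
  LinearMap.toContinuousLinearMap (toEuclideanLin (sub Φ S))

theorem norm_toLp_col {Φ : Matrix (Fin m) (Fin N) ℂ} (hcol : UnitColumns Φ) (v : Fin N) :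
    ‖WithLp.toLp 2 (col Φ v)‖ = 1 := by
  rw [← enorm_eq_norm_toLp]
  exact (congrArg Real.sqrt (hcol v)).trans Real.sqrt_one

theorem sum_norm_inner_col_sq_le (Φ : Matrix (Fin m) (Fin N) ℂ)
    (x : EuclideanSpace ℂ (Fin m)) :
    ∑ v, ‖inner ℂ (WithLp.toLp 2 (col Φ v)) x‖ ^ 2 ≤ opNorm Φ ^ 2 * ‖x‖ ^ 2 := by
  have h :=
    sum_norm_inner_apply_single_sq_le (LinearMap.toContinuousLinearMap (toEuclideanLin Φ)) x
  simp only [LinearMap.coe_toContinuousLinearMap', toEuclideanLin_single] at h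
  exact h

theorem finrank_range_subCLM {Φ : Matrix (Fin m) (Fin N) ℂ} {S : Finset (Fin N)}
    (hS : LinIndepOn Φ S) : Module.finrank ℂ (subCLM Φ S).range = S.card := by
  have hinj : Function.Injective (subCLM Φ S) := fun x y hxy =>
    WithLp.ofLp_injective 2 (mulVec_injective_iff.2 hS (congrArg WithLp.ofLp hxy))
  rw [LinearMap.finrank_range_of_inj hinj, finrank_euclideanSpace, Fintype.card_coe]

theorem norm_starProjection_range_subCLM_sq_le {Φ : Matrix (Fin m) (Fin N) ℂ}
    {S : Finset (Fin N)} (hS : LinIndepOn Φ S) (hpinv : opNorm (pinv Φ S) ≤ Real.sqrt 2)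
    {v : Fin N} (hmax : enorm ((sub Φ S)ᴴ.mulVec (col Φ v)) ≤ 1 / 2) :
    ‖(subCLM Φ S).range.starProjection (WithLp.toLp 2 (col Φ v))‖ ^ 2 ≤ 1 / 2 := by
  let B := LinearMap.toContinuousLinearMap (toEuclideanLin (pinv Φ S))
  have hBA : ∀ y, B (subCLM Φ S y) = y := fun y => by
    change WithLp.toLp 2 (pinv Φ S *ᵥ (sub Φ S *ᵥ WithLp.ofLp y)) = y
    rw [mulVec_mulVec, pinv_mul_sub hS, one_mulVec]
  have hadj : ‖(subCLM Φ S).adjoint (WithLp.toLp 2 (col Φ v))‖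
      = enorm ((sub Φ S)ᴴ.mulVec (col Φ v)) := by
    rw [subCLM, ← LinearMap.adjoint_toContinuousLinearMap,
      ← Matrix.toEuclideanLin_conjTranspose_eq_adjoint, enorm_eq_norm_toLp]
    rfl
  have h := norm_starProjection_range_le (subCLM Φ S) B hBA (WithLp.toLp 2 (col Φ v))
  rw [hadj] at h
  calc _ ≤ (Real.sqrt 2 * (1 / 2)) ^ 2 := by
        gcongr
        exact h.trans (mul_le_mul hpinv hmax (Real.sqrt_nonneg _) (by positivity))
    _ = 1 / 2 := by rw [mul_pow, Real.sq_sqrt zero_le_two]; norm_num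

theorem natCast_le_of_unitColumns {Φ : Matrix (Fin m) (Fin N) ℂ} (hN : 0 < N) (hm : 0 < m)
    (hcol : UnitColumns Φ) (htight : opNorm Φ ^ 2 = (N : ℝ) / m) : (m : ℝ) ≤ N := by
  have h := one_le_of_frame_bound (v₀ := (⟨0, hN⟩ : Fin N)) (norm_toLp_col hcol _)
    (fun x => htight ▸ sum_norm_inner_col_sq_le Φ x)
  rwa [one_le_div (by positivity)] at h

theorem sparsity_gap_of_range_le {Φ : Matrix (Fin m) (Fin N) ℂ} (hm : 0 < m)
    (hcol : UnitColumns Φ) (htight : opNorm Φ ^ 2 = (N : ℝ) / m)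
    {S : Finset (Fin N)} (hS : LinIndepOn Φ S) (hpinv : opNorm (pinv Φ S) ≤ Real.sqrt 2)
    (hmax : ∀ v ∉ S, enorm ((sub Φ S)ᴴ.mulVec (col Φ v)) ≤ 1 / 2)
    {T : Finset (Fin N)} (hrange : LinearMap.range (sub Φ S).mulVecLin ≤ colSpan Φ T) :
    (N : ℝ) / m * S.card + (T \ S).card / 2 ≤ (N : ℝ) / m * T.card := by
  have hunit := norm_toLp_col hcol
  have hcard :
      (N : ℝ) / m * Module.finrank ℂ (EuclideanSpace ℂ (Fin m)) = Fintype.card (Fin N) := by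
    rw [finrank_euclideanSpace, Fintype.card_fin, Fintype.card_fin]
    field_simp
  let L := (colSpan Φ T).map (WithLp.linearEquiv 2 ℂ (Fin m → ℂ)).symm.toLinearMap
  have hL_mem : ∀ x, x ∈ L ↔ WithLp.ofLp x ∈ colSpan Φ T :=
    fun _ => Submodule.mem_map_equiv _
  have hKL : (subCLM Φ S).range ≤ L := by
    rintro _ ⟨y, rfl⟩
    exact (hL_mem _).2 (hrange ⟨WithLp.ofLp y, rfl⟩)
  have hL : Module.finrank ℂ L ≤ T.card := by
    rw [LinearEquiv.finrank_map_eq]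
    exact (finrank_range_le_card _).trans_eq (Fintype.card_coe T)
  have hgap := mul_finrank_add_card_div_two_le hunit hcard
    (fun x => htight ▸ sum_norm_inner_col_sq_le Φ x) hKL (T \ S) fun v hv =>
      ⟨(hL_mem _).2 (Submodule.subset_span ⟨⟨v, (Finset.mem_sdiff.1 hv).1⟩, rfl⟩),
        norm_starProjection_range_subCLM_sq_le hS hpinv (hmax v (Finset.mem_sdiff.1 hv).2)⟩
  rw [finrank_range_subCLM hS] at hgap
  exact hgap.trans (by gcongr)

theorem threshold_le_of_sparsity_gap {m N s t δ : ℝ} (hm : 0 < m) (hmN : m ≤ N)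
    (hgap : N / m * s + (t - δ) / 2 ≤ N / m * t) :
    (s - δ * m / (2 * N)) * (1 - m / (2 * N))⁻¹ ≤ t := by
  have hN : 0 < N := hm.trans_le hmN
  have hpos : 0 < 1 - m / (2 * N) := by
    rw [sub_pos, div_lt_one (by positivity)]; linarith
  rw [← div_eq_mul_inv, div_le_iff₀ hpos]
  have := mul_le_mul_of_nonneg_left hgap (div_nonneg hm.le hN.le : 0 ≤ m / N)
  field_simp at this ⊢
  nlinarith

theorem sparsity_gap_weak_incoherence_general {m N : ℕ}
    (Φ : Matrix (Fin m) (Fin N) ℂ) (hcol : UnitColumns Φ)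
    (htight : opNorm Φ ^ 2 = (N : ℝ) / m)
    (S : Finset (Fin N)) (hS : LinIndepOn Φ S)
    (hpinv : opNorm (pinv Φ S) ≤ Real.sqrt 2)
    (hmax : ∀ v ∉ S, enorm ((sub Φ S)ᴴ.mulVec (col Φ v)) ≤ 1 / 2)
    (T : Finset (Fin N))
    (ht : (T.card : ℝ) <
      ((S.card : ℝ) - ((S ∩ T).card : ℝ) * m / (2 * N)) * (1 - (m : ℝ) / (2 * N))⁻¹)
    (ν : Measure ({j // j ∈ S} → ℂ))
    (hac : ν ≪ volume) :
    ν {x | (sub Φ S).mulVec x ∈ colSpan Φ T} = 0 := by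
  by_contra hν
  have hrange : LinearMap.range (sub Φ S).mulVecLin ≤ colSpan Φ T := by
    by_contra h
    exact hν (hac (Measure.addHaar_preimage_submodule_eq_zero volume _ _ h))
  have hN : 0 < N := Nat.pos_of_ne_zero <| by
    rintro rfl
    simp [Finset.eq_empty_of_isEmpty S, Finset.eq_empty_of_isEmpty T] at ht
  have hm : 0 < m := Nat.pos_of_ne_zero <| by
    rintro rfl
    simpa using hcol ⟨0, hN⟩
  have hmN := natCast_le_of_unitColumns hN hm hcol htight
  have hsdiff : ((T \ S).card : ℝ) = T.card - (S ∩ T).card := by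
    rw [eq_sub_iff_add_eq, Finset.inter_comm]
    exact_mod_cast Finset.card_sdiff_add_card_inter T S
  have hgap := sparsity_gap_of_range_le hm hcol htight hS hpinv hmax hrange
  rw [hsdiff] at hgap
  exact (threshold_le_of_sparsity_gap (by positivity) hmN hgap).not_gt ht

/-- Theorem 19, sparsity gap under weak incoherence.
Suppose `Φ` has unit-norm columns and is a tight frame (`‖Φ‖² = N/m`).  Let
`S` index a linearly independent family of `s` columns with `‖Φ_S†‖ ≤ √2` and
`max_{v ∉ S} ‖Φ_Sᴴ φ_v‖₂ ≤ 1/2`.  Let `T` be a set of `t` columns with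
overlap `δ = |S ∩ T|`, and assume `t < (s − δm/(2N))·(1 − m/(2N))⁻¹`.  Then a
generic signal in `range(Φ_S)` almost surely cannot be represented using the
columns in `T`. -/
theorem sparsity_gap_weak_incoherence {m N : ℕ}
    (Φ : Matrix (Fin m) (Fin N) ℂ) (hcol : UnitColumns Φ)
    (htight : opNorm Φ ^ 2 = (N : ℝ) / m)
    (S : Finset (Fin N)) (hS : LinIndepOn Φ S)
    (hpinv : opNorm (pinv Φ S) ≤ Real.sqrt 2)
    (hmax : ∀ v ∉ S, enorm ((sub Φ S)ᴴ.mulVec (col Φ v)) ≤ 1 / 2)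
    (T : Finset (Fin N))
    (ht : (T.card : ℝ) <
      ((S.card : ℝ) - ((S ∩ T).card : ℝ) * m / (2 * N)) * (1 - (m : ℝ) / (2 * N))⁻¹)
    (ν : Measure ({j // j ∈ S} → ℂ)) (hν : IsProbabilityMeasure ν)
    (hac : ν ≪ volume) :
    ν {x | (sub Φ S).mulVec x ∈ colSpan Φ T} = 0 :=
  sparsity_gap_weak_incoherence_general Φ hcol htight S hS hpinv hmax T ht ν hac

end SparsityGap
end
end
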